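/- Let n ≥ 2 and m ≥ 1 be natural numbers. There exists a function A : ℝ^n → ℝ realized by a ReLU network with (m+5)·⌈log₂ n⌉ + 2 hidden layers of widths 3n, n, 6n, 6n, …, 6n (input dimension n, output dimension 1), such that |A(x) - Π_{j=1}^n g_1(x_j)| ≤ 3^n · 2^{-m} for all x = (x_1,…,x_n) ∈ [0,1]^n. -/

import Mathlib

/-- The ReLU function `σ(x) = max{x, 0}`. -/
noncomputable def relu (x : ℝ) : ℝ := max x 0

/-- The tent function `g₁(x) = max{1 - |x|, 0}`. -/
noncomputable def g1 (x : ℝ) : ℝ := max (1 - |x|) 0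

/-- `RealizedByReluNet n₀ ws F` means the scalar-valued function `F : ℝ^{n₀} → ℝ` is exactly
a ReLU network with hidden layers of widths given by the list `ws`:
`F = W_{L+1} ∘ σ ∘ W_L ∘ ⋯ ∘ σ ∘ W_1` with affine maps `W_i` (given by a matrix and a bias
vector) and the ReLU `σ` applied componentwise. -/
def RealizedByReluNet : (n0 : ℕ) → List ℕ → ((Fin n0 → ℝ) → ℝ) → Prop
  | n0, [], F => ∃ (a : Fin n0 → ℝ) (b : ℝ), ∀ x, F x = ∑ j, a j * x j + b
  | n0, w :: ws, F => ∃ (A : Matrix (Fin w) (Fin n0) ℝ) (b : Fin w → ℝ)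
      (G : (Fin w → ℝ) → ℝ), RealizedByReluNet w ws G ∧
      ∀ x, F x = G (fun i => relu (A.mulVec x i + b i))

/-
The tent values are exact: `g1 y = σ(y + 1) - 2 σ(y) + σ(y - 1)` is computed by the first two
layers. The product of the `n` tent values is then formed by a binary tree of `⌈log₂ n⌉` levels;
each level multiplies pairs in parallel with `m + 5` layers. One multiplication first clamps its
factors to `[0, 1]` and then uses `a b = 2 ((a + b) / 2)² - a² / 2 - b² / 2`, each square being
Yarotsky's sawtooth approximation `z² ≈ z - ∑_{k ≤ t} tooth^[k] z / 4 ^ k`, which is exact up to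
`4 ^ (-t - 1)`. Since clamping is `1`-Lipschitz and factors in `[0, 1]` satisfy
`|∏ aᵢ - ∏ bᵢ| ≤ ∑ |aᵢ - bᵢ|`, the errors of the fewer than `2 n` multiplications just add up.
-/

open Set

/-! ### ReLU networks on arbitrary index types -/

@[fun_prop]
def IsAffine {ι : Type} (φ : (ι → ℝ) → ℝ) : Prop :=
  ∃ (L : (ι → ℝ) →ₗ[ℝ] ℝ) (c : ℝ), ∀ y, φ y = L y + c

namespace IsAffine

variable {ι κ : Type} {φ ψ : (ι → ℝ) → ℝ}

@[fun_prop]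
lemma const (c : ℝ) : IsAffine fun _ : ι → ℝ => c := ⟨0, c, by simp⟩

@[fun_prop]
lemma apply (i : ι) : IsAffine fun y : ι → ℝ => y i := ⟨LinearMap.proj i, 0, by simp⟩

@[fun_prop]
lemma add (hφ : IsAffine φ) (hψ : IsAffine ψ) : IsAffine fun y => φ y + ψ y := by
  obtain ⟨L, c, h⟩ := hφ
  obtain ⟨L', c', h'⟩ := hψ
  exact ⟨L + L', c + c', fun y => by simp only [h, h', LinearMap.add_apply]; ring⟩

@[fun_prop]
lemma const_mul (a : ℝ) (hφ : IsAffine φ) : IsAffine fun y => a * φ y := by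
  obtain ⟨L, c, h⟩ := hφ
  exact ⟨a • L, a * c, fun y => by simp only [h, LinearMap.smul_apply, smul_eq_mul]; ring⟩

@[fun_prop]
lemma sub (hφ : IsAffine φ) (hψ : IsAffine ψ) : IsAffine fun y => φ y - ψ y := by
  simpa only [sub_eq_add_neg, neg_mul, one_mul] using hφ.add (hψ.const_mul (-1))

@[fun_prop]
lemma div_const (hφ : IsAffine φ) (a : ℝ) : IsAffine fun y => φ y / a := by
  simpa only [div_eq_inv_mul] using hφ.const_mul a⁻¹

lemma comp {T : (κ → ℝ) → ι → ℝ} (hφ : IsAffine φ) (hT : ∀ i, IsAffine fun y => T y i) :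
    IsAffine fun y => φ (T y) := by
  obtain ⟨L, c, h⟩ := hφ
  choose L' c' h' using hT
  refine ⟨L ∘ₗ LinearMap.pi L', L c' + c, fun y => ?_⟩
  have hTy : T y = (fun i => L' i y) + c' := funext fun i => h' i y
  simp only [hTy, h, map_add, add_assoc, LinearMap.coe_comp, Function.comp_apply, add_left_inj]
  rfl

lemma exists_eq_sum {n : ℕ} {φ : (Fin n → ℝ) → ℝ} (hφ : IsAffine φ) :
    ∃ (a : Fin n → ℝ) (b : ℝ), ∀ x, φ x = ∑ j, a j * x j + b := by
  obtain ⟨L, c, h⟩ := hφ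
  refine ⟨fun j => L fun k => if j = k then 1 else 0, c, fun x => ?_⟩
  simp only [h, L.pi_apply_eq_sum_univ x, smul_eq_mul, mul_comm]

end IsAffine

def ReluLayer {ι κ : Type} (L : (ι → ℝ) → κ → ℝ) : Prop :=
  ∀ k, ∃ φ, IsAffine φ ∧ ∀ y, L y k = relu (φ y)

lemma ReluLayer.comp_affine {ι κ μ : Type} {L : (κ → ℝ) → μ → ℝ} (hL : ReluLayer L)
    {T : (ι → ℝ) → κ → ℝ} (hT : ∀ k, IsAffine fun y => T y k) :
    ReluLayer fun y => L (T y) := fun k => by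
  obtain ⟨φ, hφ, h⟩ := hL k
  exact ⟨_, hφ.comp hT, fun y => h (T y)⟩

def RealizedOn : (ι : Type) → List ℕ → ((ι → ℝ) → ℝ) → Prop
  | _, [], F => IsAffine F
  | ι, w :: ws, F => ∃ (L : (ι → ℝ) → Fin w → ℝ) (G : (Fin w → ℝ) → ℝ),
      ReluLayer L ∧ RealizedOn (Fin w) ws G ∧ ∀ x, F x = G (L x)

lemma RealizedOn.comp_affine {ι κ : Type} {ws : List ℕ} {G : (κ → ℝ) → ℝ}
    (hG : RealizedOn κ ws G) {T : (ι → ℝ) → κ → ℝ} (hT : ∀ k, IsAffine fun y => T y k) :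
    RealizedOn ι ws fun y => G (T y) := by
  cases ws with
  | nil => exact IsAffine.comp hG hT
  | cons w ws =>
    obtain ⟨L, G', hL, hG', h⟩ := hG
    exact ⟨_, G', hL.comp_affine hT, hG', fun y => h (T y)⟩

lemma RealizedOn.toRealizedByReluNet {n : ℕ} {ws : List ℕ} {F : (Fin n → ℝ) → ℝ}
    (hF : RealizedOn (Fin n) ws F) : RealizedByReluNet n ws F := by
  induction ws generalizing n F with
  | nil => exact IsAffine.exists_eq_sum hF
  | cons w ws ih =>
    obtain ⟨L, G, hL, hG, h⟩ := hF
    choose φ hφ hLφ using hL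
    choose a b hab using fun i => (hφ i).exists_eq_sum
    refine ⟨Matrix.of a, b, G, ih hG, fun x => ?_⟩
    rw [h]
    congr 1
    ext i
    simp [hLφ, hab, Matrix.mulVec, dotProduct]

/-- The coordinates of `Φ` are affine functions of the last of ReLU hidden layers of widths `ws`,
stated in continuation-passing style: `Φ` can be fed into any further network. -/
def ReluStack (ι : Type) (ws : List ℕ) (κ : Type) (Φ : (ι → ℝ) → κ → ℝ) : Prop :=
  ∀ (rest : List ℕ) (G : (κ → ℝ) → ℝ), RealizedOn κ rest G →
    RealizedOn ι (ws ++ rest) fun x => G (Φ x)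

namespace ReluStack

variable {ι κ μ : Type} {ws ws' : List ℕ}

lemma comp {Φ : (ι → ℝ) → κ → ℝ} {Ψ : (κ → ℝ) → μ → ℝ} (hΦ : ReluStack ι ws κ Φ)
    (hΨ : ReluStack κ ws' μ Ψ) : ReluStack ι (ws ++ ws') μ fun x => Ψ (Φ x) :=
  fun rest G hG => by simpa only [List.append_assoc] using hΦ _ _ (hΨ rest G hG)

lemma of_isAffine {T : (ι → ℝ) → κ → ℝ} (hT : ∀ k, IsAffine fun y => T y k) :
    ReluStack ι [] κ T :=
  fun _ _ hG => hG.comp_affine hT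

lemma affine_comp {Φ : (ι → ℝ) → κ → ℝ} (hΦ : ReluStack ι ws κ Φ) {T : (κ → ℝ) → μ → ℝ}
    (hT : ∀ k, IsAffine fun y => T y k) : ReluStack ι ws μ fun x => T (Φ x) :=
  fun rest _ hG => hΦ rest _ (hG.comp_affine hT)

/-- The neurons indexed by `κ` are embedded into `Fin w`; the remaining ones are constantly `0`. -/
lemma of_reluLayer [Fintype κ] {L : (ι → ℝ) → κ → ℝ} (hL : ReluLayer L) {w : ℕ}
    (hw : Fintype.card κ ≤ w) : ReluStack ι [w] κ L := fun rest G hG => by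
  classical
  obtain ⟨e⟩ := Function.Embedding.nonempty_of_card_le (hw.trans (Fintype.card_fin w).ge)
  refine ⟨fun y => Function.extend e (L y) 0, fun z => G fun k => z (e k), fun i => ?_,
    hG.comp_affine fun k => IsAffine.apply (e k), fun y => ?_⟩
  · by_cases hi : ∃ k, e k = i
    · obtain ⟨k, rfl⟩ := hi
      simpa only [e.injective.extend_apply] using hL k
    · exact ⟨fun _ => 0, IsAffine.const 0, fun y => by
        simp [Function.extend_apply' _ _ _ hi, relu]⟩
  · simp only [e.injective.extend_apply]

lemma iterate {w : ℕ} {L : (κ → ℝ) → κ → ℝ} (hL : ReluStack κ [w] κ L) :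
    ∀ t, ReluStack κ (List.replicate t w) κ L^[t]
  | 0 => fun _ _ hG => hG
  | t + 1 => by
    rw [Function.iterate_succ]
    exact hL.comp (iterate hL t)

lemma realizedOn {Φ : (ι → ℝ) → κ → ℝ} (hΦ : ReluStack ι ws κ Φ) {G : (κ → ℝ) → ℝ}
    (hG : IsAffine G) : RealizedOn ι ws fun x => G (Φ x) := by
  simpa using hΦ [] G hG

end ReluStack

def parallel {α β : Type} (L : (α → ℝ) → β → ℝ) {ι : Type} (S : ι × α → ℝ) : ι × β → ℝ :=
  fun x => L (fun a => S (x.1, a)) x.2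

lemma ReluLayer.parallel {α β ι : Type} {L : (α → ℝ) → β → ℝ} (hL : ReluLayer L) :
    ReluLayer (parallel L (ι := ι)) := by
  rintro ⟨i, b⟩
  obtain ⟨φ, hφ, h⟩ := hL b
  exact ⟨_, hφ.comp fun a => IsAffine.apply (i, a), fun S => h _⟩

lemma parallel_iterate {α ι : Type} (L : (α → ℝ) → α → ℝ) (t : ℕ) (S : ι × α → ℝ) :
    (parallel L)^[t] S = parallel L^[t] S := by
  induction t generalizing S with
  | zero => rfl
  | succ t ih => rw [Function.iterate_succ_apply, ih]; rfl

noncomputable def rampLayer {n : ℕ} (c : Fin n → ℝ) {α : Type} (v : α → ℝ) : α × Fin n → ℝ :=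
  fun x => relu (v x.1 - c x.2)

lemma reluLayer_rampLayer {n : ℕ} (c : Fin n → ℝ) {α : Type} :
    ReluLayer (rampLayer c (α := α)) :=
  fun x => ⟨_, (IsAffine.apply x.1).sub (IsAffine.const _), fun _ => rfl⟩

/-! ### Yarotsky's squaring -/

lemma relu_of_nonneg {x : ℝ} (h : 0 ≤ x) : relu x = x := max_eq_left h

lemma relu_of_nonpos {x : ℝ} (h : x ≤ 0) : relu x = 0 := max_eq_right h

noncomputable def tooth (y : ℝ) : ℝ := 2 * relu y - 4 * relu (y - 1 / 2)

lemma tooth_of_le_half {y : ℝ} (h₀ : 0 ≤ y) (h : y ≤ 1 / 2) : tooth y = 2 * y := by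
  rw [tooth, relu_of_nonneg h₀, relu_of_nonpos (by linarith)]; ring

lemma tooth_of_half_le {y : ℝ} (h : 1 / 2 ≤ y) : tooth y = 2 - 2 * y := by
  rw [tooth, relu_of_nonneg (by linarith), relu_of_nonneg (by linarith)]; ring

lemma tooth_mem {y : ℝ} (hy : y ∈ Icc 0 1) : tooth y ∈ Icc 0 1 := by
  obtain ⟨h₀, h₁⟩ := hy
  rcases le_total y (1 / 2) with h | h
  · rw [tooth_of_le_half h₀ h]; constructor <;> linarith
  · rw [tooth_of_half_le h]; constructor <;> linarith

lemma iterate_tooth_mem {y : ℝ} (hy : y ∈ Icc 0 1) (t : ℕ) : tooth^[t] y ∈ Icc 0 1 := by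
  induction t with
  | zero => exact hy
  | succ t ih => rw [Function.iterate_succ_apply']; exact tooth_mem ih

/-- The identity behind Yarotsky's squaring: it makes `z - ∑_{k ≤ t} tooth^[k] z / 4 ^ k` equal
to `sqApprox t z`. -/
lemma tooth_mul_one_sub {y : ℝ} (hy : y ∈ Icc 0 1) :
    tooth y * (1 - tooth y) = 4 * (y * (1 - y)) - tooth y := by
  rcases le_total y (1 / 2) with h | h
  · rw [tooth_of_le_half hy.1 h]; ring
  · rw [tooth_of_half_le h]; ring

noncomputable def sqApprox (t : ℕ) (z : ℝ) : ℝ := z ^ 2 + tooth^[t] z * (1 - tooth^[t] z) / 4 ^ t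

lemma sqApprox_sub_sq_mem {z : ℝ} (hz : z ∈ Icc 0 1) (t : ℕ) :
    sqApprox t z - z ^ 2 ∈ Icc 0 (1 / 4 ^ (t + 1)) := by
  obtain ⟨hy₀, hy₁⟩ := iterate_tooth_mem hz t
  rw [sqApprox, add_sub_cancel_left]
  constructor
  · have : 0 ≤ tooth^[t] z * (1 - tooth^[t] z) := mul_nonneg hy₀ (by linarith)
    positivity
  · calc tooth^[t] z * (1 - tooth^[t] z) / 4 ^ t ≤ 1 / 4 / 4 ^ t := by
          gcongr; nlinarith [sq_nonneg (tooth^[t] z - 1 / 2)]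
      _ = 1 / 4 ^ (t + 1) := by ring

noncomputable def sqLayer (s : Fin 3 → ℝ) : Fin 3 → ℝ :=
  ![relu (2 * s 0 - 4 * s 1), relu (2 * s 0 - 4 * s 1 - 1 / 2),
    relu (4 * s 2 - 8 * s 0 + 16 * s 1)]

lemma reluLayer_sqLayer : ReluLayer sqLayer := by
  intro k
  fin_cases k
  exacts [⟨_, by fun_prop, fun _ => rfl⟩, ⟨_, by fun_prop, fun _ => rfl⟩,
    ⟨_, by fun_prop, fun _ => rfl⟩]

/-- The scaling by `4 ^ (t + 1)` makes the update from `t` to `t + 1` independent of `t`, so that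
the single layer `sqLayer` performs every step. -/
noncomputable def sqState (t : ℕ) (z : ℝ) : Fin 3 → ℝ :=
  ![tooth^[t] z, relu (tooth^[t] z - 1 / 2), 4 ^ (t + 1) * sqApprox t z]

noncomputable def sqSeed (z : ℝ) : Fin 3 → ℝ := ![z / 2, 0, 2 * z]

lemma sqLayer_sqSeed {z : ℝ} (hz : z ∈ Icc 0 1) : sqLayer (sqSeed z) = sqState 0 z := by
  ext k
  fin_cases k
  · show relu (2 * (z / 2) - 4 * 0) = z
    rw [relu_of_nonneg (by linarith [hz.1])]; ring
  · show relu (2 * (z / 2) - 4 * 0 - 1 / 2) = relu (z - 1 / 2)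
    congr 1; ring
  · show relu (4 * (2 * z) - 8 * (z / 2) + 16 * 0) = 4 ^ 1 * (z ^ 2 + z * (1 - z) / 4 ^ 0)
    rw [relu_of_nonneg (by linarith [hz.1])]; ring

lemma sqLayer_sqState {z : ℝ} (hz : z ∈ Icc 0 1) (t : ℕ) :
    sqLayer (sqState t z) = sqState (t + 1) z := by
  set y := tooth^[t] z
  have hy := iterate_tooth_mem hz t
  have hty : tooth^[t + 1] z = tooth y := Function.iterate_succ_apply' _ _ _
  have htooth : 2 * y - 4 * relu (y - 1 / 2) = tooth y := by rw [tooth, relu_of_nonneg hy.1]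
  ext k
  fin_cases k
  · show relu (2 * y - 4 * relu (y - 1 / 2)) = tooth^[t + 1] z
    rw [htooth, hty, relu_of_nonneg (tooth_mem hy).1]
  · show relu (2 * y - 4 * relu (y - 1 / 2) - 1 / 2) = relu (tooth^[t + 1] z - 1 / 2)
    rw [htooth, hty]
  · show relu (4 * (4 ^ (t + 1) * sqApprox t z) - 8 * y + 16 * relu (y - 1 / 2))
      = 4 ^ (t + 1 + 1) * sqApprox (t + 1) z
    have hstep : 4 * (4 ^ (t + 1) * sqApprox t z) - 8 * y + 16 * relu (y - 1 / 2)
        = 4 ^ (t + 1 + 1) * sqApprox (t + 1) z := by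
      rw [sqApprox, sqApprox, hty, tooth_mul_one_sub hy, ← htooth]
      field_simp
      ring
    have hsq := (sqApprox_sub_sq_mem hz (t + 1)).1
    rw [hstep, relu_of_nonneg (mul_nonneg (by positivity) (by linarith [sq_nonneg z]))]

lemma sqLayer_iterate_sqSeed {z : ℝ} (hz : z ∈ Icc 0 1) (t : ℕ) :
    sqLayer^[t + 1] (sqSeed z) = sqState t z := by
  induction t with
  | zero => exact sqLayer_sqSeed hz
  | succ t ih => rw [Function.iterate_succ_apply', ih, sqLayer_sqState hz]

/-! ### Multiplication -/

noncomputable def clamp (y : ℝ) : ℝ := projIcc (0 : ℝ) 1 zero_le_one y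

lemma relu_sub_relu_sub_one (y : ℝ) : relu y - relu (y - 1) = clamp y := by
  simp only [clamp, coe_projIcc, relu]
  rcases le_total y 0 with h | h
  · rw [max_eq_right (by linarith), max_eq_right (by linarith), min_eq_right (by linarith),
      max_eq_left h]; ring
  rcases le_total y 1 with h' | h'
  · rw [max_eq_left (by linarith), max_eq_right (by linarith), min_eq_right h', max_eq_right h]
    ring
  · rw [max_eq_left (by linarith), max_eq_left (by linarith), min_eq_left h',
      max_eq_right zero_le_one]; ring

lemma clamp_mem (y : ℝ) : clamp y ∈ Icc 0 1 := (projIcc 0 1 zero_le_one y).2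

lemma clamp_of_mem {y : ℝ} (hy : y ∈ Icc 0 1) : clamp y = y := by
  simp [clamp, projIcc_of_mem _ hy]

lemma abs_clamp_sub_clamp_le (a b : ℝ) : |clamp a - clamp b| ≤ |a - b| := by
  simpa [clamp, Subtype.dist_eq, Real.dist_eq] using
    (LipschitzWith.projIcc zero_le_one).dist_le_mul a b

lemma abs_polarization_sub_mul_le {a b X Y Z ε : ℝ} (hX : X - a ^ 2 ∈ Icc 0 ε)
    (hY : Y - b ^ 2 ∈ Icc 0 ε) (hZ : Z - ((a + b) / 2) ^ 2 ∈ Icc 0 ε) :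
    |2 * Z - X / 2 - Y / 2 - a * b| ≤ 2 * ε := by
  have h : 2 * Z - X / 2 - Y / 2 - a * b
      = 2 * (Z - ((a + b) / 2) ^ 2) - (X - a ^ 2) / 2 - (Y - b ^ 2) / 2 := by ring
  rw [h, abs_le]
  constructor <;> linarith [hX.1, hX.2, hY.1, hY.2, hZ.1, hZ.2]

section Multiplication

variable {ι : Type}

noncomputable def polarize (c : ι × Fin 2 → ℝ) : ι × Fin 3 → ℝ :=
  fun x => ![c (x.1, 0), c (x.1, 1), (c (x.1, 0) + c (x.1, 1)) / 2] x.2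

lemma polarize_mem {c : ι × Fin 2 → ℝ} (hc : ∀ a, c a ∈ Icc 0 1) (x : ι × Fin 3) :
    polarize c x ∈ Icc 0 1 := by
  obtain ⟨i, r⟩ := x
  have h₀ := hc (i, 0)
  have h₁ := hc (i, 1)
  fin_cases r
  · exact h₀
  · exact h₁
  · show (c (i, 0) + c (i, 1)) / 2 ∈ Icc 0 1
    constructor <;> linarith [h₀.1, h₁.1, h₀.2, h₁.2]

noncomputable def mulSeed (C : (ι × Fin 2) × Fin 2 → ℝ) : (ι × Fin 3) × Fin 3 → ℝ :=
  fun x => sqSeed (polarize (fun a => C (a, 0) - C (a, 1)) x.1) x.2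

lemma isAffine_polarize (x : ι × Fin 3) : IsAffine fun c : ι × Fin 2 → ℝ => polarize c x := by
  obtain ⟨i, r⟩ := x
  fin_cases r
  exacts [IsAffine.apply _, IsAffine.apply _,
    ((IsAffine.apply _).add (IsAffine.apply _)).div_const 2]

lemma isAffine_mulSeed (x : (ι × Fin 3) × Fin 3) : IsAffine fun C => mulSeed C x := by
  obtain ⟨y, s⟩ := x
  have hz : IsAffine fun C : (ι × Fin 2) × Fin 2 → ℝ => polarize (fun a => C (a, 0) - C (a, 1)) y :=
    (isAffine_polarize y).comp fun a => by fun_prop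
  fin_cases s
  exacts [hz.div_const 2, IsAffine.const 0, hz.const_mul 2]

noncomputable def depolarize (t : ℕ) (S : (ι × Fin 3) × Fin 3 → ℝ) (i : ι) : ℝ :=
  (2 * S ((i, 2), 2) - S ((i, 0), 2) / 2 - S ((i, 1), 2) / 2) / 4 ^ (t + 1)

lemma isAffine_depolarize (t : ℕ) (i : ι) : IsAffine fun S => depolarize t S i := by
  unfold depolarize; fun_prop

/-- The multiplication network of Lemma 4, one copy for each `i : ι`. -/
noncomputable def mulNet (t : ℕ) (v : ι × Fin 2 → ℝ) : ι → ℝ :=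
  depolarize t ((parallel sqLayer)^[t + 1] (mulSeed (rampLayer ![0, 1] v)))

lemma reluStack_mulNet [Fintype ι] (t : ℕ) {w : ℕ} (hw : 9 * Fintype.card ι ≤ w) :
    ReluStack (ι × Fin 2) (List.replicate (t + 2) w) ι (mulNet t) :=
  ((ReluStack.of_reluLayer (reluLayer_rampLayer _) (by simp; omega)).comp
    ((ReluStack.of_isAffine isAffine_mulSeed).comp
      ((ReluStack.of_reluLayer reluLayer_sqLayer.parallel (by simp; omega)).iterate
        (t + 1)))).affine_comp
    (isAffine_depolarize t)

lemma mulNet_apply (t : ℕ) (v : ι × Fin 2 → ℝ) (i : ι) :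
    mulNet t v i = 2 * sqApprox t ((clamp (v (i, 0)) + clamp (v (i, 1))) / 2)
      - sqApprox t (clamp (v (i, 0))) / 2 - sqApprox t (clamp (v (i, 1))) / 2 := by
  have hseed : ∀ x, (fun s => mulSeed (rampLayer ![0, 1] v) (x, s))
      = sqSeed (polarize (fun a => clamp (v a)) x) := fun x => by
    simp [mulSeed, rampLayer, relu_sub_relu_sub_one]
  have hstate : ∀ x, (parallel sqLayer)^[t + 1] (mulSeed (rampLayer ![0, 1] v)) (x, 2)
      = 4 ^ (t + 1) * sqApprox t (polarize (fun a => clamp (v a)) x) := fun x => by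
    rw [parallel_iterate, parallel, hseed,
      sqLayer_iterate_sqSeed (polarize_mem (fun a => clamp_mem (v a)) x)]
    rfl
  simp only [mulNet, depolarize, hstate, polarize, Matrix.cons_val_zero, Matrix.cons_val_one,
    Matrix.cons_val_two, Matrix.head_cons, Matrix.tail_cons]
  field_simp

lemma abs_mulNet_sub_le (t : ℕ) (v : ι × Fin 2 → ℝ) (i : ι) :
    |mulNet t v i - clamp (v (i, 0)) * clamp (v (i, 1))| ≤ 2 / 4 ^ (t + 1) := by
  have ha := clamp_mem (v (i, 0))
  have hb := clamp_mem (v (i, 1))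
  rw [mulNet_apply]
  refine (abs_polarization_sub_mul_le (sqApprox_sub_sq_mem ha t) (sqApprox_sub_sq_mem hb t)
    (sqApprox_sub_sq_mem ⟨by linarith [ha.1, hb.1], by linarith [ha.2, hb.2]⟩ t)).trans_eq ?_
  ring

end Multiplication

/-! ### The product tree -/

lemma abs_prod_sub_prod_le {ι : Type*} (s : Finset ι) {f g : ι → ℝ} (hf : ∀ i ∈ s, |f i| ≤ 1)
    (hg : ∀ i ∈ s, |g i| ≤ 1) : |∏ i ∈ s, f i - ∏ i ∈ s, g i| ≤ ∑ i ∈ s, |f i - g i| := by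
  classical
  induction s using Finset.induction_on with
  | empty => simp
  | insert a s ha ih =>
    simp only [Finset.mem_insert, forall_eq_or_imp] at hf hg
    have hgs : |∏ i ∈ s, g i| ≤ 1 := by
      rw [Finset.abs_prod]
      exact Finset.prod_le_one (fun i _ => abs_nonneg _) hg.2
    rw [Finset.prod_insert ha, Finset.prod_insert ha, Finset.sum_insert ha]
    calc |f a * ∏ i ∈ s, f i - g a * ∏ i ∈ s, g i|
        = |f a * (∏ i ∈ s, f i - ∏ i ∈ s, g i) + (f a - g a) * ∏ i ∈ s, g i| := by ring_nf
      _ ≤ |f a| * |∏ i ∈ s, f i - ∏ i ∈ s, g i| + |f a - g a| * |∏ i ∈ s, g i| := by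
        rw [← abs_mul, ← abs_mul]; exact abs_add_le _ _
      _ ≤ 1 * ∑ i ∈ s, |f i - g i| + |f a - g a| * 1 := by
        gcongr
        · exact hf.1
        · exact ih hf.2 hg.2
      _ = |f a - g a| + ∑ i ∈ s, |f i - g i| := by ring

section Pairing

variable {p q : ℕ}

def pairUp {M : Type} [One M] (v : Fin p → M) : Fin q × Fin 2 → M :=
  fun x => if h : 2 * (x.1 : ℕ) + x.2 < p then v ⟨_, h⟩ else 1

lemma isAffine_pairUp (x : Fin q × Fin 2) : IsAffine fun u : Fin p → ℝ => pairUp u x := by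
  unfold pairUp
  split_ifs <;> fun_prop

lemma prod_pairUp {M : Type} [CommMonoid M] (hpq : p ≤ 2 * q) (v : Fin p → M) :
    ∏ x, pairUp (q := q) v x = ∏ i, v i := by
  set w : ℕ → M := fun i => if h : i < p then v ⟨i, h⟩ else 1
  calc ∏ x, pairUp (q := q) v x = ∏ i : Fin (q * 2), w i :=
        Fintype.prod_equiv finProdFinEquiv _ _ fun x => by
          simp only [pairUp, w, finProdFinEquiv_apply_val, add_comm, mul_comm]
    _ = ∏ i ∈ Finset.range p, w i := by
        rw [Fin.prod_univ_eq_prod_range w,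
          ← Finset.prod_range_mul_prod_Ico w (by omega : p ≤ q * 2),
          Finset.prod_eq_one (s := Finset.Ico p (q * 2)) fun i hi => dif_neg (by simp at hi; omega),
          mul_one]
    _ = ∏ i, v i := by
        rw [← Fin.prod_univ_eq_prod_range w]
        exact Finset.prod_congr rfl fun i _ => dif_pos i.2

lemma prod_clamp_eq_prod_pairs (hpq : p ≤ 2 * q) (u : Fin p → ℝ) :
    ∏ i, clamp (u i) = ∏ j : Fin q, clamp (pairUp u (j, 0)) * clamp (pairUp u (j, 1)) := by
  have hcomp : ∀ x : Fin q × Fin 2, clamp (pairUp u x) = pairUp (fun i => clamp (u i)) x :=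
    fun x => by
      unfold pairUp
      split_ifs
      · rfl
      · exact clamp_of_mem ⟨zero_le_one, le_rfl⟩
  simp only [← prod_pairUp hpq, ← hcomp, Fintype.prod_prod_type, Fin.prod_univ_two]

lemma reluStack_mulNet_pairUp (t : ℕ) {w : ℕ} (hw : 9 * q ≤ w) :
    ReluStack (Fin p) (List.replicate (t + 2) w) (Fin q) fun u => mulNet t (pairUp u) :=
  (ReluStack.of_isAffine isAffine_pairUp).comp (reluStack_mulNet t (by simpa using hw))

lemma abs_prod_clamp_mulNet_sub_le (t : ℕ) (hpq : p ≤ 2 * q) (u : Fin p → ℝ) :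
    |∏ j : Fin q, clamp (mulNet t (pairUp u) j) - ∏ i, clamp (u i)| ≤ q * (2 / 4 ^ (t + 1)) := by
  have hpair : ∀ j : Fin q, clamp (pairUp u (j, 0)) * clamp (pairUp u (j, 1)) ∈ Icc 0 1 :=
    fun j => by
      obtain ⟨ha₀, ha₁⟩ := clamp_mem (pairUp u (j, 0))
      obtain ⟨hb₀, hb₁⟩ := clamp_mem (pairUp u (j, 1))
      exact ⟨mul_nonneg ha₀ hb₀, mul_le_one₀ ha₁ hb₀ hb₁⟩
  rw [prod_clamp_eq_prod_pairs hpq u]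
  refine (abs_prod_sub_prod_le _ (fun j _ => ?_) (fun j _ => ?_)).trans ?_
  · exact abs_le.2 ⟨by linarith [(clamp_mem (mulNet t (pairUp u) j)).1], (clamp_mem _).2⟩
  · exact abs_le.2 ⟨by linarith [(hpair j).1], (hpair j).2⟩
  · have hterm : ∀ j : Fin q, |clamp (mulNet t (pairUp u) j)
        - clamp (pairUp u (j, 0)) * clamp (pairUp u (j, 1))| ≤ 2 / 4 ^ (t + 1) := fun j => by
      rw [← clamp_of_mem (hpair j)]
      exact (abs_clamp_sub_clamp_le _ _).trans (abs_mulNet_sub_le t _ j)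
    calc _ ≤ ∑ _j : Fin q, (2 / 4 ^ (t + 1) : ℝ) := Finset.sum_le_sum fun j _ => hterm j
      _ = q * (2 / 4 ^ (t + 1)) := by simp

end Pairing

/-- The network is a binary tree of `⌈log₂ p⌉` levels of `mulNet`, each halving the number of
factors. -/
lemma exists_realizedOn_abs_sub_prod_clamp_le (t w : ℕ) {p : ℕ} (hp : 2 ≤ p)
    (hw : 9 * ((p + 1) / 2) ≤ w) : ∃ F : (Fin p → ℝ) → ℝ,
      RealizedOn (Fin p) (List.replicate ((t + 2) * Nat.clog 2 p) w) F ∧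
      ∀ u, |F u - ∏ i, clamp (u i)| ≤ 2 * p * (2 / 4 ^ (t + 1)) := by
  induction p using Nat.strong_induction_on with
  | _ p ih =>
  have hδ : (0 : ℝ) ≤ 2 / 4 ^ (t + 1) := by positivity
  rcases hp.eq_or_lt with rfl | hp
  · refine ⟨fun u => mulNet t (pairUp u) (0 : Fin 1), ?_, fun u => ?_⟩
    · have hclog : Nat.clog 2 2 = 1 := by simpa using Nat.clog_pow 2 1 one_lt_two
      rw [hclog, mul_one]
      exact (reluStack_mulNet_pairUp t (by simpa using hw)).realizedOn (IsAffine.apply 0)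
    · rw [prod_clamp_eq_prod_pairs (q := 1) le_rfl, Fin.prod_univ_one]
      refine (abs_mulNet_sub_le t _ 0).trans ?_
      push_cast
      linarith
  · set q := (p + 1) / 2
    obtain ⟨F, hF, hFerr⟩ := ih q (by omega) (by omega) (by omega)
    refine ⟨fun u => F (mulNet t (pairUp u)), ?_, fun u => ?_⟩
    · have hclog : Nat.clog 2 p = Nat.clog 2 q + 1 := by
        simpa using Nat.clog_of_two_le one_lt_two hp.le
      rw [hclog, mul_add_one, add_comm, List.replicate_add]
      exact reluStack_mulNet_pairUp t (by omega) _ _ hF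
    · have hq : (3 * q : ℝ) ≤ 2 * p := by exact_mod_cast (by omega : 3 * q ≤ 2 * p)
      calc |F (mulNet t (pairUp u)) - ∏ i, clamp (u i)|
          ≤ |F (mulNet t (pairUp u)) - ∏ j, clamp (mulNet t (pairUp u) j)|
            + |∏ j, clamp (mulNet t (pairUp u) j) - ∏ i, clamp (u i)| := abs_sub_le _ _ _
        _ ≤ 2 * q * (2 / 4 ^ (t + 1)) + q * (2 / 4 ^ (t + 1)) :=
          add_le_add (hFerr _) (abs_prod_clamp_mulNet_sub_le t (by omega) u)
        _ ≤ 2 * p * (2 / 4 ^ (t + 1)) := by nlinarith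

/-! ### The tent layers -/

lemma relu_add_one_sub_two_mul_relu_add_relu_sub_one (y : ℝ) :
    relu (y + 1) - 2 * relu y + relu (y - 1) = g1 y := by
  simp only [relu, g1]
  rcases le_total y 0 with h | h
  · rw [abs_of_nonpos h, max_eq_right h, max_eq_right (by linarith : y - 1 ≤ 0)]
    rcases le_total y (-1) with h' | h'
    · rw [max_eq_right (by linarith), max_eq_right (by linarith)]; ring
    · rw [max_eq_left (by linarith), max_eq_left (by linarith)]; ring
  · rw [abs_of_nonneg h, max_eq_left h, max_eq_left (by linarith : 0 ≤ y + 1)]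
    rcases le_total y 1 with h' | h'
    · rw [max_eq_right (by linarith), max_eq_left (by linarith)]; ring
    · rw [max_eq_left (by linarith), max_eq_right (by linarith)]; ring

lemma g1_mem (y : ℝ) : g1 y ∈ Icc 0 1 :=
  ⟨le_max_right _ _, max_le (by linarith [abs_nonneg y]) zero_le_one⟩

lemma reluStack_g1 (n : ℕ) : ReluStack (Fin n) [3 * n, n] (Fin n) fun x j => g1 (x j) := by
  have hL : ReluLayer fun (y : Fin n × Fin 3 → ℝ) j =>
      relu (y (j, 0) - 2 * y (j, 1) + y (j, 2)) :=
    fun j => ⟨_, by fun_prop, fun _ => rfl⟩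
  convert (ReluStack.of_reluLayer (reluLayer_rampLayer ![-1, 0, 1]) (w := 3 * n)
    (by simp [mul_comm])).comp (ReluStack.of_reluLayer hL (w := n) (by simp)) using 3 with x j
  · rfl
  · simp only [rampLayer, Fin.isValue, Matrix.cons_val_zero, Matrix.cons_val_one, Matrix.cons_val,
      sub_neg_eq_add, sub_zero]
    rw [relu_add_one_sub_two_mul_relu_add_relu_sub_one, relu_of_nonneg (g1_mem _).1]

theorem approximate_tent_product_network_general (n m : ℕ) (hn : 2 ≤ n) :
    ∃ A : (Fin n → ℝ) → ℝ,
      RealizedByReluNet n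
        (3 * n :: n :: List.replicate ((m + 5) * Nat.clog 2 n) (6 * n)) A ∧
      ∀ x : Fin n → ℝ, (∀ j, x j ∈ Set.Icc (0 : ℝ) 1) →
        |A x - ∏ j, g1 (x j)| ≤ 3 ^ n / 2 ^ m := by
  obtain ⟨F, hF, hFerr⟩ := exists_realizedOn_abs_sub_prod_clamp_le (m + 3) (6 * n) hn (by omega)
  refine ⟨fun x => F fun j => g1 (x j), (reluStack_g1 n _ _ hF).toRealizedByReluNet,
    fun x _ => ?_⟩
  have hn3 : (n : ℝ) ≤ 3 ^ n := by exact_mod_cast (Nat.lt_pow_self (by norm_num)).le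
  have h24 : (2 : ℝ) ^ m ≤ 64 * 4 ^ m := by
    have := pow_le_pow_left₀ (by norm_num : (0 : ℝ) ≤ 2) (by norm_num : (2 : ℝ) ≤ 4) m
    linarith [pow_pos (by norm_num : (0 : ℝ) < 4) m]
  calc |F (fun j => g1 (x j)) - ∏ j, g1 (x j)|
      ≤ 2 * n * (2 / 4 ^ (m + 3 + 1)) := by
        simpa only [clamp_of_mem (g1_mem _)] using hFerr fun j => g1 (x j)
    _ = n / (64 * 4 ^ m) := by ring
    _ ≤ 3 ^ n / (64 * 4 ^ m) := by gcongr
    _ ≤ 3 ^ n / 2 ^ m := by gcongr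

/-- **The network `AppIdⁿ_{m,temp}` of Section 3.2.** There is a ReLU network `A` with
`(m+5)⌈log₂ n⌉ + 2` hidden layers of widths `3n, n, 6n, …, 6n` approximating
`x ↦ ∏ⱼ g₁(xⱼ)` on `[0,1]ⁿ` with error at most `3ⁿ · 2^{-m}`. -/
theorem approximate_tent_product_network (n m : ℕ) (hn : 2 ≤ n) (hm : 1 ≤ m) :
    ∃ A : (Fin n → ℝ) → ℝ,
      RealizedByReluNet n
        (3 * n :: n :: List.replicate ((m + 5) * Nat.clog 2 n) (6 * n)) A ∧
      ∀ x : Fin n → ℝ, (∀ j, x j ∈ Set.Icc (0 : ℝ) 1) →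
        |A x - ∏ j, g1 (x j)| ≤ 3 ^ n / 2 ^ m :=
  approximate_tent_product_network_general n m hn
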